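/- Let n, m ≥ 1, let Λ : ℝ^m → Matrix n n ℂ be any map all of whose values are skew-Hermitian (i.e. (Λ x)ᴴ = -(Λ x) for all x), and let Ω be a skew-Hermitian n×n complex matrix whose spectral norm satisfies ‖Ω‖₂ < π. Then: (i) every x with Λ x = Ω satisfies exp(Λ x) = exp(Ω); and (ii) every x with exp(Λ x) = exp(Ω) and ‖Λ x‖₂ < π satisfies Λ x = Ω. (Equivalently: the zero set of x ↦ ‖Λ x − Ω‖ is contained in the zero set of x ↦ ‖exp(Λ x) − exp(Ω)‖, and conversely on the region where ‖Λ x‖₂ < π.) -/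

import Mathlib

open Matrix

section Aux

open Pointwise in
/-- The spectrum of a skew-adjoint element of norm `< π` in a C⋆-algebra is contained in
the purely imaginary open strip `i(-π, π)`. -/
lemma skew_spectrum {A : Type*} [CStarAlgebra A] [Nontrivial A] {a : A}
    (ha : star a = -a) (hna : ‖a‖ < Real.pi) :
    ∀ z ∈ spectrum ℂ a, z.re = 0 ∧ |z.im| < Real.pi := by
  intro z hz
  set h : A := (-Complex.I) • a with hh
  have hsa : _root_.IsSelfAdjoint h := by
    rw [_root_.IsSelfAdjoint, hh, star_smul, ha]
    have : star (-Complex.I) = Complex.I := by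
      rw [star_neg, Complex.star_def, Complex.conj_I, neg_neg]
    rw [this, smul_neg, ← neg_smul]
  have ha' : a = (Units.mk0 (Complex.I) Complex.I_ne_zero) • h := by
    rw [hh, Units.smul_def, smul_smul]
    norm_num [Complex.I_mul_I]
  have hu : z ∈ (Units.mk0 (Complex.I) Complex.I_ne_zero) • spectrum ℂ h := by
    rw [← spectrum.unit_smul_eq_smul, ← ha']; exact hz
  obtain ⟨w, hw, rfl⟩ := hu
  have hw_re : w = (w.re : ℂ) := hsa.mem_spectrum_eq_re hw
  have hw_norm : ‖w‖ ≤ ‖h‖ := spectrum.norm_le_norm_of_mem hw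
  have hhn : ‖h‖ = ‖a‖ := by rw [hh, norm_smul]; simp
  have hwim : w.im = 0 := by rw [hw_re]; simp
  constructor
  · simp [Units.smul_def, Complex.mul_re, hwim]
  · have : |w.re| ≤ ‖w‖ := by
      exact Complex.abs_re_le_norm w
    have h2 : |(Units.mk0 (Complex.I) Complex.I_ne_zero • w : ℂ).im| ≤ ‖w‖ := by
      simpa [Units.smul_def, Complex.mul_im, hwim] using this
    calc |(Units.mk0 (Complex.I) Complex.I_ne_zero • w : ℂ).im| ≤ ‖w‖ := h2
      _ ≤ ‖h‖ := hw_norm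
      _ = ‖a‖ := hhn
      _ < Real.pi := hna

/-- A skew-adjoint element of norm `< π` in a C⋆-algebra is recovered from its exponential
by the continuous functional calculus applied to the principal logarithm. -/
lemma skew_log_exp {A : Type*} [CStarAlgebra A] [Nontrivial A] {a : A}
    (ha : star a = -a) (hna : ‖a‖ < Real.pi) :
    cfc Complex.log (NormedSpace.exp a) = a := by
  have hnorm : IsStarNormal a := ⟨by rw [Commute, SemiconjBy, ha]; rw [neg_mul, mul_neg]⟩
  have hspec := skew_spectrum ha hna
  have hexp : NormedSpace.exp a = cfc Complex.exp a :=
    (CFC.complex_exp_eq_normedSpace_exp hnorm).symm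
  have hf : ContinuousOn Complex.exp (spectrum ℂ a) := Complex.continuous_exp.continuousOn
  have hg : ContinuousOn Complex.log (Complex.exp '' spectrum ℂ a) := by
    intro y hy
    obtain ⟨z, hz, rfl⟩ := hy
    obtain ⟨h1, h2⟩ := hspec z hz
    refine (continuousAt_clog ?_).continuousWithinAt
    rw [Complex.mem_slitPlane_iff]
    rcases eq_or_ne z.im 0 with h0 | h0
    · left
      simp [Complex.exp_re, h1, h0]
    · right
      rw [Complex.exp_im, h1]
      simp only [Real.exp_zero, one_mul]
      rw [ne_eq, Real.sin_eq_zero_iff_of_lt_of_lt (abs_lt.mp h2).1 (abs_lt.mp h2).2]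
      exact h0
  rw [hexp, ← cfc_comp Complex.log Complex.exp a hnorm hg hf]
  have heq : (spectrum ℂ a).EqOn (Complex.log ∘ Complex.exp) id := by
    intro z hz
    obtain ⟨h1, h2⟩ := hspec z hz
    exact Complex.log_exp (abs_lt.mp h2).1 (le_of_lt (abs_lt.mp h2).2)
  rw [cfc_congr heq, cfc_id ℂ a]

/-- The exponential map is injective on skew-adjoint elements of norm `< π`
in a C⋆-algebra. -/
lemma skew_exp_inj {A : Type*} [CStarAlgebra A] [Nontrivial A] {a b : A}
    (ha : star a = -a) (hb : star b = -b) (hna : ‖a‖ < Real.pi) (hnb : ‖b‖ < Real.pi)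
    (h : NormedSpace.exp a = NormedSpace.exp b) : a = b := by
  rw [← skew_log_exp ha hna, ← skew_log_exp hb hnb, h]

end Aux

/-- The spectral norm (ℓ²→ℓ² operator norm, i.e. largest singular value) of a
complex square matrix. -/
noncomputable def matSpectralNorm {n : ℕ} (A : Matrix (Fin n) (Fin n) ℂ) : ℝ :=
  ‖Matrix.toEuclideanCLM (𝕜 := ℂ) A‖

/-- Proposition 1 of the paper: for a family `Λ` of skew-Hermitian matrices
parametrized by `x : ℝ^m` and a skew-Hermitian target generator `Ω` with
spectral norm `< π`, (i) any `x` with `Λ x = Ω` satisfies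
`exp (Λ x) = exp Ω`, and (ii) any `x` with `exp (Λ x) = exp Ω` and
`‖Λ x‖₂ < π` satisfies `Λ x = Ω`. -/
theorem generator_minimizers_iff_unitary_minimizers
    {n m : ℕ} (hn : 1 ≤ n) (hm : 1 ≤ m)
    (Λ : (Fin m → ℝ) → Matrix (Fin n) (Fin n) ℂ)
    (hΛ : ∀ x, (Λ x)ᴴ = -(Λ x))
    (Ω : Matrix (Fin n) (Fin n) ℂ)
    (hΩ : Ωᴴ = -Ω) (hΩnorm : matSpectralNorm Ω < Real.pi) :
    (∀ x : Fin m → ℝ, Λ x = Ω → NormedSpace.exp (Λ x) = NormedSpace.exp Ω) ∧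
    (∀ x : Fin m → ℝ, NormedSpace.exp (Λ x) = NormedSpace.exp Ω →
      matSpectralNorm (Λ x) < Real.pi → Λ x = Ω) := by
  refine ⟨fun x h => by rw [h], fun x hexp hnorm => ?_⟩
  haveI : NeZero n := ⟨by omega⟩
  letI := Matrix.instL2OpMetricSpace (𝕜 := ℂ) (m := Fin n) (n := Fin n)
  letI := Matrix.instL2OpNormedAddCommGroup (𝕜 := ℂ) (m := Fin n) (n := Fin n)
  letI := Matrix.instL2OpNormedSpace (𝕜 := ℂ) (m := Fin n) (n := Fin n)
  letI := Matrix.instL2OpNormedRing (𝕜 := ℂ) (n := Fin n)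
  letI := Matrix.instL2OpNormedAlgebra (𝕜 := ℂ) (n := Fin n)
  letI := Matrix.instCStarRing (𝕜 := ℂ) (n := Fin n)
  letI : CStarAlgebra (Matrix (Fin n) (Fin n) ℂ) := {}
  exact skew_exp_inj (by rw [Matrix.star_eq_conjTranspose, hΛ x])
    (by rw [Matrix.star_eq_conjTranspose, hΩ]) hnorm hΩnorm hexp
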